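/- With Σ = {0, T, F} and the XOR-like operation + as above, the inverse of the bijective CA F given by (Fc)_i = c_i + c_{i+1} on finitely-supported configurations is not causal: for every radius r ∈ ℕ there exist two finitely-supported configurations c, c' that agree on the window {-r, ..., r} around position 0 yet F⁻¹(c)₀ ≠ F⁻¹(c')₀. -/
import Mathlib


/-- The three-letter alphabet Σ = {0, T, F}. -/
inductive Alpha : Type
  | zero : Alpha
  | T : Alpha
  | F : Alpha
deriving DecidableEq

/-- The XOR-like local operation: T+F = F+T = T, T+T = F+F = F, a+0 = a, 0+a = 0. -/
def Alpha.add : Alpha → Alpha → Alpha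
  | .zero, _ => .zero
  | a, .zero => a
  | .T, .T => .F
  | .F, .F => .F
  | .T, .F => .T
  | .F, .T => .T

/-- The global CA map `(F c)_i = c_i + c_{i+1}`. -/
def caF (c : ℤ → Alpha) : ℤ → Alpha := fun i => Alpha.add (c i) (c (i + 1))

lemma add_zero_left (a : Alpha) : Alpha.add .zero a = .zero := by cases a <;> rfl

/-- The inverse of the bijective CA `F` is not causal: for every radius `r` there are
finitely supported configurations `c = F d` and `c' = F d'` agreeing on the window
`{-r, …, r}` around `0`, whose preimages differ at `0`. -/
theorem caF_inverse_not_causal :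
    ∀ r : ℕ, ∃ c c' d d' : ℤ → Alpha,
      {i : ℤ | c i ≠ Alpha.zero}.Finite ∧ {i : ℤ | c' i ≠ Alpha.zero}.Finite ∧
      {i : ℤ | d i ≠ Alpha.zero}.Finite ∧ {i : ℤ | d' i ≠ Alpha.zero}.Finite ∧
      caF d = c ∧ caF d' = c' ∧
      (∀ i : ℤ, |i| ≤ (r : ℤ) → c i = c' i) ∧
      d 0 ≠ d' 0 := by
  intro r
  set n : ℤ := (r : ℤ) + 1 with hn
  set d : ℤ → Alpha := fun i => if |i| ≤ n then .F else .zero with hd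
  set d' : ℤ → Alpha := fun i => if |i| ≤ n then .T else .zero with hd'
  refine ⟨caF d, caF d', d, d', ?_, ?_, ?_, ?_, rfl, rfl, ?_, ?_⟩
  · refine (Set.finite_Icc (-(n+1)) (n+1)).subset ?_
    intro i hi
    simp only [Set.mem_setOf_eq, caF, hd] at hi
    by_cases h : |i| ≤ n
    · have := abs_le.mp h
      simp [Set.mem_Icc]; omega
    · simp [h, add_zero_left] at hi
  · refine (Set.finite_Icc (-(n+1)) (n+1)).subset ?_
    intro i hi
    simp only [Set.mem_setOf_eq, caF, hd'] at hi
    by_cases h : |i| ≤ n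
    · have := abs_le.mp h
      simp [Set.mem_Icc]; omega
    · simp [h, add_zero_left] at hi
  · refine (Set.finite_Icc (-n) n).subset ?_
    intro i hi
    simp only [Set.mem_setOf_eq, hd] at hi
    by_cases h : |i| ≤ n
    · have := abs_le.mp h; simp [Set.mem_Icc]; omega
    · simp [h] at hi
  · refine (Set.finite_Icc (-n) n).subset ?_
    intro i hi
    simp only [Set.mem_setOf_eq, hd'] at hi
    by_cases h : |i| ≤ n
    · have := abs_le.mp h; simp [Set.mem_Icc]; omega
    · simp [h] at hi
  · intro i hi
    have h1 : |i| ≤ n := by omega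
    have h2 : |i + 1| ≤ n := by
      rcases abs_le.mp hi with ⟨a, b⟩
      rw [abs_le]; omega
    simp [caF, hd, hd', h1, h2, Alpha.add]
  · have h0 : (0 : ℤ) ≤ n := by omega
    simp [hd, hd', h0]
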